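/- arXiv:2102.02691 — 2 statements merged into one kernel-verified Lean document; each statement's English description precedes it below -/
import Mathlib

section
/- In the HMC setting with the coverage hypothesis, if a measurable h : 𝐐 → ℝ with h ≥ 0, ∫ h dμ < ∞ and ‖h‖₂ < ∞ satisfies ‖T h‖₂ = ‖h‖₂, then h = α·f μ-a.e., where α = (∫_𝐐 h dμ)/(∫_𝐐 f dμ). -/
/-! Write `h = u f`. The invariance `f(Q) g(P) = f(q) g(p)` factors the transfer operator as
`T h = f · E_κ[u ∘ Q]`, where `κ = g ν`, so `‖T h‖₂² = ∫ (E_κ[u ∘ Q])² f dμ`. Since `H` preserves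
`f μ ⊗ g ν`, also `‖h‖₂² = ∫ u² f dμ = ∫ E_κ[(u ∘ Q)²] f dμ`. Jensen gives
`(E_κ[u ∘ Q])² ≤ E_κ[(u ∘ Q)²]` pointwise, so equal norms force `u ∘ Q(q, ·)` to have zero
variance under `κ` for a.e. `q`. Coverage then makes `u` a constant `c`, and integrating
`h = c f` identifies `c`. -/

open MeasureTheory
open scoped ENNReal

section

variable {Ω : Type*} [MeasurableSpace Ω] {ν : Measure Ω}

theorem lintegral_ofReal_eq_one_of_integral_eq_one {g : Ω → ℝ} (hg0 : 0 ≤ᵐ[ν] g)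
    (hg1 : ∫ p, g p ∂ν = 1) : ∫⁻ p, ENNReal.ofReal (g p) ∂ν = 1 := by
  have hgint : Integrable g ν := Integrable.of_integral_ne_zero (by simp [hg1])
  rw [← ofReal_integral_eq_lintegral_ofReal hgint hg0, hg1, ENNReal.ofReal_one]

theorem isProbabilityMeasure_withDensity_ofReal {g : Ω → ℝ}
    (hg1 : ∫⁻ p, ENNReal.ofReal (g p) ∂ν = 1) :
    IsProbabilityMeasure (ν.withDensity fun p => ENNReal.ofReal (g p)) :=
  ⟨by rw [withDensity_apply _ MeasurableSet.univ, setLIntegral_univ, hg1]⟩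

theorem integral_withDensity_ofReal_eq_integral_mul {g : Ω → ℝ} (hg : Measurable g)
    (hg0 : ∀ p, 0 ≤ g p) (w : Ω → ℝ) :
    ∫ p, w p ∂ν.withDensity (fun p => ENNReal.ofReal (g p)) = ∫ p, g p * w p ∂ν := by
  rw [integral_withDensity_eq_integral_toReal_smul hg.ennreal_ofReal
    (ae_of_all _ fun _ => ENNReal.ofReal_lt_top)]
  simp only [ENNReal.toReal_ofReal (hg0 _), smul_eq_mul]

theorem memLp_two_of_lintegral_sq_ne_top {v : Ω → ℝ} (hv : AEStronglyMeasurable v ν)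
    (hfin : ∫⁻ p, ENNReal.ofReal (v p ^ 2) ∂ν ≠ ∞) : MemLp v 2 ν :=
  (memLp_two_iff_integrable_sq hv).2 ⟨hv.pow 2,
    (hasFiniteIntegral_iff_ofReal (ae_of_all _ fun _ => sq_nonneg _)).2 hfin.lt_top⟩

theorem ofReal_sq_integral_le_lintegral_sq [IsProbabilityMeasure ν] {v : Ω → ℝ}
    (hv : AEStronglyMeasurable v ν) :
    ENNReal.ofReal ((∫ p, v p ∂ν) ^ 2) ≤ ∫⁻ p, ENNReal.ofReal (v p ^ 2) ∂ν := by
  rcases eq_or_ne (∫⁻ p, ENNReal.ofReal (v p ^ 2) ∂ν) ∞ with hinf | hfin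
  · exact hinf ▸ le_top
  have hv2 := memLp_two_of_lintegral_sq_ne_top hv hfin
  have hvar := ProbabilityTheory.variance_nonneg v ν
  rw [ProbabilityTheory.variance_eq_sub hv2] at hvar
  rw [← ofReal_integral_eq_lintegral_ofReal hv2.integrable_sq (ae_of_all _ fun _ => sq_nonneg _)]
  exact ENNReal.ofReal_le_ofReal (by simpa using hvar)

theorem ae_eq_integral_of_lintegral_sq_eq [IsProbabilityMeasure ν] {v : Ω → ℝ}
    (hv : AEStronglyMeasurable v ν)
    (heq : ∫⁻ p, ENNReal.ofReal (v p ^ 2) ∂ν = ENNReal.ofReal ((∫ p, v p ∂ν) ^ 2)) :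
    v =ᵐ[ν] fun _ => ∫ p, v p ∂ν := by
  have hsq : ∀ x : ℝ, ‖x‖ₑ ^ 2 = ENNReal.ofReal (x ^ 2) := fun x => by
    rw [← enorm_pow, Real.enorm_of_nonneg (sq_nonneg _)]
  rw [← ProbabilityTheory.evariance_eq_zero_iff hv.aemeasurable,
    ProbabilityTheory.evariance_def' hv]
  simp only [hsq, heq, tsub_self]

theorem ae_ae_eq_integral_of_lintegral_sq_integral_mul_eq {α : Type*} [MeasurableSpace α]
    {μ : Measure α} [SFinite ν] [IsProbabilityMeasure ν] {v : α → Ω → ℝ}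
    (hv : Measurable (Function.uncurry v)) {w : α → ℝ≥0∞} (hw : Measurable w)
    (hw0 : ∀ᵐ q ∂μ, w q ≠ 0) (hw_top : ∀ q, w q ≠ ∞)
    (hfin : ∫⁻ q, (∫⁻ p, ENNReal.ofReal (v q p ^ 2) ∂ν) * w q ∂μ ≠ ∞)
    (heq : ∫⁻ q, ENNReal.ofReal ((∫ p, v q p ∂ν) ^ 2) * w q ∂μ
      = ∫⁻ q, (∫⁻ p, ENNReal.ofReal (v q p ^ 2) ∂ν) * w q ∂μ) :
    ∀ᵐ q ∂μ, v q =ᵐ[ν] fun _ => ∫ p, v q p ∂ν := by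
  have hv_q : ∀ q, AEStronglyMeasurable (v q) ν :=
    fun q => (hv.comp measurable_prodMk_left).aestronglyMeasurable
  have hJensen : ∀ q, ENNReal.ofReal ((∫ p, v q p ∂ν) ^ 2) * w q
      ≤ (∫⁻ p, ENNReal.ofReal (v q p ^ 2) ∂ν) * w q :=
    fun q => mul_le_mul_left (ofReal_sq_integral_le_lintegral_sq (hv_q q)) _
  have hJensen_eq := ae_eq_of_ae_le_of_lintegral_le (ae_of_all _ hJensen) (heq ▸ hfin)
    ((hv.pow_const 2).ennreal_ofReal.lintegral_prod_right'.mul hw).aemeasurable heq.ge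
  filter_upwards [hJensen_eq, hw0] with q hq hwq
  exact ae_eq_integral_of_lintegral_sq_eq (hv_q q)
    ((ENNReal.mul_left_inj hwq (hw_top q)).1 hq).symm

theorem ae_eq_integral_div_integral_mul_of_div_ae_eq_const {f h : Ω → ℝ} {c : ℝ}
    (hf0 : ∀ᵐ q ∂ν, f q ≠ 0) (hfI : ∫ q, f q ∂ν ≠ 0) (hc : ∀ᵐ q ∂ν, (h / f) q = c) :
    ∀ᵐ q ∂ν, h q = ((∫ x, h x ∂ν) / (∫ x, f x ∂ν)) * f q := by
  have hh : ∀ᵐ q ∂ν, h q = c * f q := by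
    filter_upwards [hc, hf0] with q hq hfq
    rw [← hq, Pi.div_apply, div_mul_cancel₀ _ hfq]
  have hc_eq : c = (∫ x, h x ∂ν) / (∫ x, f x ∂ν) := by
    rw [integral_congr_ae hh, integral_const_mul, mul_div_cancel_right₀ _ hfI]
  exact hc_eq ▸ hh

end

theorem MeasureTheory.MeasurePreserving.lintegral_comp_mul_of_comp_ae_eq {γ : Type*}
    [MeasurableSpace γ] {m : Measure γ} {T : γ → γ} (hT : MeasurePreserving T m m)
    {ψ ρ : γ → ℝ≥0∞} (hψ : Measurable ψ) (hρ : Measurable ρ) (hρT : ρ ∘ T =ᵐ[m] ρ) :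
    ∫⁻ x, ψ (T x) * ρ x ∂m = ∫⁻ x, ψ x * ρ x ∂m := by
  calc ∫⁻ x, ψ (T x) * ρ x ∂m = ∫⁻ x, (ψ * ρ) (T x) ∂m :=
        lintegral_congr_ae (hρT.mono fun x hx => by simp only [Pi.mul_apply, ← hx]; rfl)
    _ = ∫⁻ x, ψ x * ρ x ∂m := hT.lintegral_comp (hψ.mul hρ)

noncomputable def hmcTransfer {α β : Type*} [MeasurableSpace β] (ν : Measure β) (g : β → ℝ)
    (H : α × β → α × β) (h : α → ℝ) (q : α) : ℝ :=
  ∫ p, h (H (q, p)).1 * g (H (q, p)).2 ∂ν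

noncomputable def weightedSqNorm {α : Type*} [MeasurableSpace α] (μ : Measure α) (f h : α → ℝ) :
    ℝ≥0∞ :=
  ∫⁻ q, ENNReal.ofReal (h q ^ 2 / f q) ∂μ

section HMC

variable {α β : Type*} [MeasurableSpace α] [MeasurableSpace β]
  {μ : Measure α} {ν : Measure β} [SFinite ν]
  {f : α → ℝ} {g : β → ℝ} {H : α × β → α × β}

local notation "κ" => ν.withDensity fun p => ENNReal.ofReal (g p)

theorem hmcTransfer_ae_eq_mul_integral_div
    (hHmp : MeasurePreserving H (μ.prod ν) (μ.prod ν))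
    (hinv : ∀ᵐ x ∂(μ.prod ν), f (H x).1 * g (H x).2 = f x.1 * g x.2)
    (hfpos : ∀ᵐ q ∂μ, 0 < f q) (hg : Measurable g) (hg0 : ∀ p, 0 ≤ g p) (h : α → ℝ) :
    ∀ᵐ q ∂μ, hmcTransfer ν g H h q = f q * ∫ p, (h / f) (H (q, p)).1 ∂κ := by
  have hfQ : ∀ᵐ x ∂μ.prod ν, 0 < f (H x).1 :=
    hHmp.quasiMeasurePreserving.ae (Measure.quasiMeasurePreserving_fst.ae hfpos)
  filter_upwards [Measure.ae_ae_of_ae_prod hinv, Measure.ae_ae_of_ae_prod hfQ]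
    with q hinv_q hfQ_q
  rw [hmcTransfer, integral_withDensity_ofReal_eq_integral_mul hg hg0, ← integral_const_mul]
  refine integral_congr_ae ?_
  filter_upwards [hinv_q, hfQ_q] with p hp hpos
  calc h (H (q, p)).1 * g (H (q, p)).2
      = h (H (q, p)).1 / f (H (q, p)).1 * (f (H (q, p)).1 * g (H (q, p)).2) := by
        field_simp
    _ = f q * (g p * (h / f) (H (q, p)).1) := by rw [hp, Pi.div_apply]; ring

theorem weightedSqNorm_hmcTransfer_eq
    (hHmp : MeasurePreserving H (μ.prod ν) (μ.prod ν))
    (hinv : ∀ᵐ x ∂(μ.prod ν), f (H x).1 * g (H x).2 = f x.1 * g x.2)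
    (hfpos : ∀ᵐ q ∂μ, 0 < f q) (hg : Measurable g) (hg0 : ∀ p, 0 ≤ g p) (h : α → ℝ) :
    weightedSqNorm μ f (hmcTransfer ν g H h)
      = ∫⁻ q, ENNReal.ofReal ((∫ p, (h / f) (H (q, p)).1 ∂κ) ^ 2) * ENNReal.ofReal (f q)
          ∂μ := by
  refine lintegral_congr_ae ?_
  filter_upwards [hmcTransfer_ae_eq_mul_integral_div hHmp hinv hfpos hg hg0 h, hfpos]
    with q hT hfq
  rw [hT, ← ENNReal.ofReal_mul (sq_nonneg _)]
  congr 1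
  field_simp

/-- `H` preserves the density `f(q) g(p)` with respect to `μ ⊗ ν`, so `f μ` is stationary. -/
theorem lintegral_lintegral_comp_fst_mul_eq
    (hHmp : MeasurePreserving H (μ.prod ν) (μ.prod ν))
    (hinv : ∀ᵐ x ∂(μ.prod ν), f (H x).1 * g (H x).2 = f x.1 * g x.2)
    (hf : Measurable f) (hg : Measurable g) (hg0 : ∀ p, 0 ≤ g p)
    (hg1 : ∫⁻ p, ENNReal.ofReal (g p) ∂ν = 1) {φ : α → ℝ≥0∞} (hφ : Measurable φ) :
    ∫⁻ q, (∫⁻ p, φ (H (q, p)).1 ∂κ) * ENNReal.ofReal (f q) ∂μ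
      = ∫⁻ q, φ q * ENNReal.ofReal (f q) ∂μ := by
  set ρ : α × β → ℝ≥0∞ := fun x => ENNReal.ofReal (f x.1 * g x.2)
  have hρ : Measurable ρ :=
    ((hf.comp measurable_fst).mul (hg.comp measurable_snd)).ennreal_ofReal
  have hρ_split : ∀ q p, ρ (q, p) = ENNReal.ofReal (f q) * ENNReal.ofReal (g p) :=
    fun q p => ENNReal.ofReal_mul' (hg0 p)
  have hφQ : Measurable fun x => φ (H x).1 := hφ.comp (measurable_fst.comp hHmp.measurable)
  calc ∫⁻ q, (∫⁻ p, φ (H (q, p)).1 ∂κ) * ENNReal.ofReal (f q) ∂μ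
      = ∫⁻ q, ∫⁻ p, φ (H (q, p)).1 * ρ (q, p) ∂ν ∂μ := by
        refine lintegral_congr fun q => ?_
        have hφQ_q : Measurable fun p => φ (H (q, p)).1 := hφQ.comp measurable_prodMk_left
        rw [lintegral_withDensity_eq_lintegral_mul _ hg.ennreal_ofReal hφQ_q,
          ← lintegral_mul_const' _ _ ENNReal.ofReal_ne_top]
        simp only [hρ_split, Pi.mul_apply]
        refine lintegral_congr fun p => ?_
        ring
    _ = ∫⁻ x, φ (H x).1 * ρ x ∂(μ.prod ν) := (lintegral_prod _ (hφQ.mul hρ).aemeasurable).symm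
    _ = ∫⁻ x, φ x.1 * ρ x ∂(μ.prod ν) :=
        hHmp.lintegral_comp_mul_of_comp_ae_eq (hφ.comp measurable_fst) hρ
          (hinv.mono fun x hx => by simp only [Function.comp_apply, ρ, hx])
    _ = ∫⁻ q, ∫⁻ p, φ q * ρ (q, p) ∂ν ∂μ :=
        lintegral_prod _ ((hφ.comp measurable_fst).mul hρ).aemeasurable
    _ = ∫⁻ q, φ q * ENNReal.ofReal (f q) ∂μ := by
        refine lintegral_congr fun q => ?_
        simp only [hρ_split, ← mul_assoc]
        rw [lintegral_const_mul _ hg.ennreal_ofReal, hg1, mul_one]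

theorem weightedSqNorm_eq_lintegral_lintegral_sq
    (hHmp : MeasurePreserving H (μ.prod ν) (μ.prod ν))
    (hinv : ∀ᵐ x ∂(μ.prod ν), f (H x).1 * g (H x).2 = f x.1 * g x.2)
    (hf : Measurable f) (hfpos : ∀ᵐ q ∂μ, 0 < f q) (hg : Measurable g) (hg0 : ∀ p, 0 ≤ g p)
    (hg1 : ∫⁻ p, ENNReal.ofReal (g p) ∂ν = 1) {h : α → ℝ} (hh : Measurable h) :
    weightedSqNorm μ f h
      = ∫⁻ q, (∫⁻ p, ENNReal.ofReal ((h / f) (H (q, p)).1 ^ 2) ∂κ) * ENNReal.ofReal (f q)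
          ∂μ := by
  rw [lintegral_lintegral_comp_fst_mul_eq hHmp hinv hf hg hg0 hg1
    (((hh.div hf).pow_const 2).ennreal_ofReal)]
  refine lintegral_congr_ae ?_
  filter_upwards [hfpos] with q hfq
  rw [← ENNReal.ofReal_mul (sq_nonneg _), Pi.div_apply]
  congr 1
  field_simp

end HMC

theorem hmc_norm_equality_implies_proportional_general
    {α β : Type*} [MeasurableSpace α] [MeasurableSpace β]
    (μ : Measure α) (ν : Measure β) [SigmaFinite ν]
    (f : α → ℝ) (hf : Measurable f) (hfpos : ∀ᵐ q ∂μ, 0 < f q)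
    (hfI : 0 < ∫ q, f q ∂μ)
    (g : β → ℝ) (hg : Measurable g) (hgnonneg : ∀ p, 0 ≤ g p)
    (hgI : ∫ p, g p ∂ν = 1)
    (H : α × β → α × β)
    (hHmp : MeasurePreserving H (μ.prod ν) (μ.prod ν))
    (hinv : ∀ᵐ x ∂(μ.prod ν), f (H x).1 * g (H x).2 = f x.1 * g x.2)
    (hcoverage : ∀ u : α → ℝ, Measurable u →
      (∀ᵐ q ∂μ, ∃ c : ℝ,
        (fun p => u (H (q, p)).1)
          =ᵐ[ν.withDensity (fun p => ENNReal.ofReal (g p))] (fun _ => c)) →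
      ∃ c : ℝ, ∀ᵐ q ∂μ, u q = c)
    (h : α → ℝ) (hh : Measurable h)
    (hhL2 : ∫⁻ q, ENNReal.ofReal (h q ^ 2 / f q) ∂μ < ⊤)
    (heq : ∫⁻ q, ENNReal.ofReal ((∫ p, h (H (q, p)).1 * g (H (q, p)).2 ∂ν) ^ 2 / f q) ∂μ
      = ∫⁻ q, ENNReal.ofReal (h q ^ 2 / f q) ∂μ) :
    ∀ᵐ q ∂μ, h q = ((∫ x, h x ∂μ) / (∫ x, f x ∂μ)) * f q := by
  have hg1 := lintegral_ofReal_eq_one_of_integral_eq_one (ae_of_all _ hgnonneg) hgI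
  have := isProbabilityMeasure_withDensity_ofReal hg1
  have hnorm := weightedSqNorm_eq_lintegral_lintegral_sq hHmp hinv hf hfpos hg hgnonneg hg1 hh
  change weightedSqNorm μ f h < ⊤ at hhL2
  change weightedSqNorm μ f (hmcTransfer ν g H h) = weightedSqNorm μ f h at heq
  rw [weightedSqNorm_hmcTransfer_eq hHmp hinv hfpos hg hgnonneg, hnorm] at heq
  rw [hnorm] at hhL2
  have hconst := ae_ae_eq_integral_of_lintegral_sq_integral_mul_eq
    (v := fun q p => (h / f) (H (q, p)).1)
    ((hh.div hf).comp (measurable_fst.comp hHmp.measurable)) hf.ennreal_ofReal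
    (hfpos.mono fun _ hq => (ENNReal.ofReal_pos.2 hq).ne') (fun _ => ENNReal.ofReal_ne_top)
    hhL2.ne heq
  obtain ⟨c, hc⟩ := hcoverage (h / f) (hh.div hf) (hconst.mono fun _ hq => ⟨_, hq⟩)
  exact ae_eq_integral_div_integral_mul_of_div_ae_eq_const (hfpos.mono fun _ => ne_of_gt)
    hfI.ne' hc

/-- In the HMC setting with the coverage hypothesis, if a measurable
`h ≥ 0` with `∫ h dμ < ∞` and `‖h‖₂ < ∞` satisfies `‖T h‖₂ = ‖h‖₂`, then
`h = α·f` μ-a.e., where `α = (∫ h dμ)/(∫ f dμ)`. -/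
theorem hmc_norm_equality_implies_proportional
    {α β : Type*} [MeasurableSpace α] [MeasurableSpace β]
    (μ : Measure α) (ν : Measure β) [SigmaFinite μ] [SigmaFinite ν]
    (f : α → ℝ) (hf : Measurable f) (hfpos : ∀ᵐ q ∂μ, 0 < f q)
    (hfint : Integrable f μ) (hfI : 0 < ∫ q, f q ∂μ)
    (g : β → ℝ) (hg : Measurable g) (hgnonneg : ∀ p, 0 ≤ g p)
    (hgI : ∫ p, g p ∂ν = 1)
    (H : α × β → α × β) (hHmeas : Measurable H) (hHbij : Function.Bijective H)
    (hHmp : MeasurePreserving H (μ.prod ν) (μ.prod ν))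
    (hinv : ∀ᵐ x ∂(μ.prod ν), f (H x).1 * g (H x).2 = f x.1 * g x.2)
    (hcoverage : ∀ u : α → ℝ, Measurable u →
      (∀ᵐ q ∂μ, ∃ c : ℝ,
        (fun p => u (H (q, p)).1)
          =ᵐ[ν.withDensity (fun p => ENNReal.ofReal (g p))] (fun _ => c)) →
      ∃ c : ℝ, ∀ᵐ q ∂μ, u q = c)
    (h : α → ℝ) (hh : Measurable h) (hhnonneg : ∀ q, 0 ≤ h q)
    (hhint : Integrable h μ)
    (hhL2 : ∫⁻ q, ENNReal.ofReal (h q ^ 2 / f q) ∂μ < ⊤)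
    (heq : ∫⁻ q, ENNReal.ofReal ((∫ p, h (H (q, p)).1 * g (H (q, p)).2 ∂ν) ^ 2 / f q) ∂μ
      = ∫⁻ q, ENNReal.ofReal (h q ^ 2 / f q) ∂μ) :
    ∀ᵐ q ∂μ, h q = ((∫ x, h x ∂μ) / (∫ x, f x ∂μ)) * f q :=
  hmc_norm_equality_implies_proportional_general μ ν f hf hfpos hfI g hg hgnonneg hgI H hHmp hinv
    hcoverage h hh hhL2 heq
end

section
/- Let E be a real Hilbert space and T : E → E a continuous linear operator that is self-adjoint (⟨T a, b⟩ = ⟨a, T b⟩ for all a, b) and a contraction (‖T x‖ ≤ ‖x‖ for all x). Let h ∈ E and suppose the sequence of norms ‖T^n h‖ converges. If a subsequence T^{m_n} h converges weakly to h∞ ∈ E, then ‖h∞‖ = lim_{n→∞} ‖T^n h‖ and the subsequence converges strongly: ‖T^{m_n} h − h∞‖ → 0. -/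
open Filter Topology
open scoped RealInnerProductSpace

/-!
For self-adjoint `T`, `⟪T^p h, T^q h⟫ = ⟪h, T^(p+q) h⟫` only depends on `p + q`, and equals
`‖T^j h‖ ^ 2` when `p + q = 2 j`. Along a subsequence of `m` of constant parity, the inner
products `⟪T^(m i) h, T^(m j) h⟫` therefore tend to `L ^ 2` as `j → ∞`, and testing the weak
convergence against the terms of the subsequence and then against `h∞` gives `‖h∞‖ ^ 2 = L ^ 2`.
Weak convergence together with convergence of the norms to the norm of the limit is strong
convergence.
-/

theorem Nat.exists_strictMono_even_add (m : ℕ → ℕ) :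
    ∃ φ : ℕ → ℕ, StrictMono φ ∧ ∀ i j, Even (m (φ i) + m (φ j)) := by
  have hparity : ∃ᶠ n in atTop, Even (m n) ∨ Odd (m n) :=
    Frequently.of_forall fun n => Nat.even_or_odd (m n)
  rcases frequently_or_distrib.mp hparity with hev | hodd
  · obtain ⟨φ, hφ, hφev⟩ := extraction_of_frequently_atTop hev
    exact ⟨φ, hφ, fun i j => (hφev i).add (hφev j)⟩
  · obtain ⟨φ, hφ, hφodd⟩ := extraction_of_frequently_atTop hodd
    exact ⟨φ, hφ, fun i j => (hφodd i).add_odd (hφodd j)⟩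

section InnerProductSpace

variable {E : Type*} [NormedAddCommGroup E] [InnerProductSpace ℝ E]

theorem real_inner_self_eq_of_tendsto_inner {ι : Type*} {l : Filter ι} [l.NeBot] {x : ι → E}
    {y : E} {c : ℝ} (hweak : ∀ b, Tendsto (fun i => ⟪x i, b⟫) l (𝓝 ⟪y, b⟫))
    (hc : ∀ i, Tendsto (fun j => ⟪x i, x j⟫) l (𝓝 c)) : ⟪y, y⟫ = c := by
  have hy : ∀ i, ⟪x i, y⟫ = c := fun i => by
    rw [real_inner_comm]
    exact tendsto_nhds_unique ((hweak (x i)).congr fun j => real_inner_comm _ _) (hc i)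
  exact tendsto_nhds_unique (hweak y) (tendsto_const_nhds.congr fun i => (hy i).symm)

theorem tendsto_of_tendsto_inner_of_tendsto_norm {ι : Type*} {l : Filter ι} {x : ι → E} {y : E}
    (hweak : Tendsto (fun i => ⟪x i, y⟫) l (𝓝 ⟪y, y⟫))
    (hnorm : Tendsto (fun i => ‖x i‖) l (𝓝 ‖y‖)) : Tendsto x l (𝓝 y) := by
  have hsq : Tendsto (fun i => ‖x i - y‖ ^ 2) l (𝓝 0) := by
    have := (hnorm.pow 2).sub (hweak.const_mul 2) |>.add_const (‖y‖ ^ 2)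
    rw [real_inner_self_eq_norm_sq] at this
    convert this using 1
    · ext i; exact norm_sub_sq_real _ _
    · ring_nf
  rw [tendsto_iff_norm_sub_tendsto_zero]
  simpa using hsq.sqrt

namespace LinearMap.IsSymmetric

theorem inner_pow_apply_pow_apply {T : E →ₗ[ℝ] E} (hT : T.IsSymmetric) (x : E) {p q j : ℕ}
    (hpq : p + q = 2 * j) :
    ⟪(T ^ p) x, (T ^ q) x⟫ = ‖(T ^ j) x‖ ^ 2 := by
  rw [hT.pow p, ← Module.End.mul_apply, ← pow_add, hpq, two_mul, pow_add, Module.End.mul_apply,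
    ← hT.pow j, real_inner_self_eq_norm_sq]

theorem tendsto_inner_pow_apply {T : E →ₗ[ℝ] E} (hT : T.IsSymmetric) {x : E} {L : ℝ}
    (hL : Tendsto (fun n => ‖(T ^ n) x‖) atTop (𝓝 L)) (p : ℕ) {k : ℕ → ℕ}
    (hk : Tendsto k atTop atTop) (hpar : ∀ j, Even (p + k j)) :
    Tendsto (fun j => ⟪(T ^ p) x, (T ^ k j) x⟫) atTop (𝓝 (L ^ 2)) := by
  have hhalf : Tendsto (fun j => (p + k j) / 2) atTop atTop :=
    (Nat.tendsto_div_const_atTop two_ne_zero).comp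
      (tendsto_atTop_mono (fun j => Nat.le_add_left _ p) hk)
  refine ((hL.comp hhalf).pow 2).congr fun j => ?_
  exact (hT.inner_pow_apply_pow_apply x (Nat.two_mul_div_two_of_even (hpar j)).symm).symm

end LinearMap.IsSymmetric

end InnerProductSpace

theorem weak_limit_is_strong_limit_of_norms_converge_general
    {E : Type*} [NormedAddCommGroup E] [InnerProductSpace ℝ E]
    (T : E →L[ℝ] E)
    (hsa : ∀ a b : E, ⟪T a, b⟫ = ⟪a, T b⟫)
    (h hinf : E) (L : ℝ)
    (hL : Tendsto (fun n => ‖(T ^ n) h‖) atTop (𝓝 L))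
    (m : ℕ → ℕ) (hm : StrictMono m)
    (hweak : ∀ b : E, Tendsto (fun n => ⟪(T ^ m n) h, b⟫) atTop (𝓝 ⟪hinf, b⟫)) :
    ‖hinf‖ = L ∧ Tendsto (fun n => ‖(T ^ m n) h - hinf‖) atTop (𝓝 0) := by
  have hT : (T : E →ₗ[ℝ] E).IsSymmetric := hsa
  have hpow (n : ℕ) : ⇑(T ^ n) = ⇑((T : E →ₗ[ℝ] E) ^ n) := by
    rw [← ContinuousLinearMap.toLinearMap_pow]; rfl
  simp only [hpow] at hL hweak ⊢
  obtain ⟨φ, hφ, hpar⟩ := Nat.exists_strictMono_even_add m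
  have hinner : ⟪hinf, hinf⟫ = L ^ 2 :=
    real_inner_self_eq_of_tendsto_inner (fun b => (hweak b).comp hφ.tendsto_atTop)
      fun i => hT.tendsto_inner_pow_apply hL _ (hm.comp hφ).tendsto_atTop (hpar i)
  have hnorm : ‖hinf‖ = L := by
    rwa [real_inner_self_eq_norm_sq,
      sq_eq_sq₀ (norm_nonneg _) (ge_of_tendsto' hL fun n => norm_nonneg _)] at hinner
  refine ⟨hnorm, tendsto_iff_norm_sub_tendsto_zero.mp ?_⟩
  refine tendsto_of_tendsto_inner_of_tendsto_norm (hweak hinf) ?_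
  rw [hnorm]
  exact hL.comp hm.tendsto_atTop

/-- Let `E` be a real Hilbert space and `T` a continuous linear
self-adjoint contraction on `E`. If the sequence of norms `‖T^n h‖` converges (to `L`)
and a subsequence `T^{m n} h` converges weakly to `hinf`, then `‖hinf‖ = L` and the
subsequence converges strongly: `‖T^{m n} h − hinf‖ → 0`. -/
theorem weak_limit_is_strong_limit_of_norms_converge
    {E : Type*} [NormedAddCommGroup E] [InnerProductSpace ℝ E] [CompleteSpace E]
    (T : E →L[ℝ] E)
    (hsa : ∀ a b : E, ⟪T a, b⟫ = ⟪a, T b⟫)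
    (hcontr : ∀ x : E, ‖T x‖ ≤ ‖x‖)
    (h hinf : E) (L : ℝ)
    (hL : Tendsto (fun n => ‖(T ^ n) h‖) atTop (𝓝 L))
    (m : ℕ → ℕ) (hm : StrictMono m)
    (hweak : ∀ b : E, Tendsto (fun n => ⟪(T ^ m n) h, b⟫) atTop (𝓝 ⟪hinf, b⟫)) :
    ‖hinf‖ = L ∧ Tendsto (fun n => ‖(T ^ m n) h - hinf‖) atTop (𝓝 0) :=
  weak_limit_is_strong_limit_of_norms_converge_general T hsa h hinf L hL m hm hweak
end
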